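/- The inverse Gaussian Q-function Q^{-1} is strictly convex on the interval (0, 1/2). -/

import Mathlib

open Real Set Filter MeasureTheory

/-- The Gaussian tail function `Q(t) = (1/√(2π)) ∫ t..∞, exp(-u²/2) du`. -/
noncomputable def gaussQ (t : ℝ) : ℝ :=
  (Real.sqrt (2 * Real.pi))⁻¹ * ∫ u in Set.Ioi t, Real.exp (-u ^ 2 / 2)

/-- The inverse of the Gaussian tail function. -/
noncomputable def Qinv : ℝ → ℝ := Function.invFun gaussQ

/-!
`Q' = -φ` with `φ(t) = exp (-t²/2) / √(2π)`, so `Q` is strictly decreasing, and since `φ` decreases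
on `(0, ∞)`, `Q` is strictly convex there; `Q 0 = 1/2` and `Q → 0`, so `Q` maps `(0, ∞)` onto
`(0, 1/2)`. Inverting a strictly decreasing strictly convex function gives a strictly convex one:
if `Q z = a Q x₁ + b Q x₂ > Q (a x₁ + b x₂)`, then `z < a x₁ + b x₂`.
-/

open Topology

theorem StrictConvexOn.strictConvexOn_of_strictAntiOn_of_leftInvOn
    {𝕜 E β : Type*} [Semiring 𝕜] [PartialOrder 𝕜]
    [AddCommMonoid E] [LinearOrder E] [SMul 𝕜 E] [AddCommMonoid β] [PartialOrder β] [SMul 𝕜 β]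
    {s : Set E} {t : Set β} {f : E → β} {g : β → E}
    (hf : StrictConvexOn 𝕜 s f) (hf_anti : StrictAntiOn f s) (hgf : LeftInvOn g f s)
    (hft : SurjOn f s t) (ht : Convex 𝕜 t) : StrictConvexOn 𝕜 t g := by
  refine ⟨ht, ?_⟩
  rintro _ hy₁ _ hy₂ hne a b ha hb hab
  obtain ⟨x₁, hx₁, rfl⟩ := hft hy₁
  obtain ⟨x₂, hx₂, rfl⟩ := hft hy₂
  obtain ⟨z, hz, hfz⟩ := hft (ht hy₁ hy₂ ha.le hb.le hab)
  have hx : a • x₁ + b • x₂ ∈ s := hf.1 hx₁ hx₂ ha.le hb.le hab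
  have hlt := hf.2 hx₁ hx₂ (fun h => hne (congrArg f h)) ha hb hab
  rw [← hfz, hf_anti.lt_iff_gt hx hz] at hlt
  rwa [← hfz, hgf hz, hgf hx₁, hgf hx₂]

lemma integrable_exp_neg_sq_div_two : Integrable fun u : ℝ => exp (-u ^ 2 / 2) := by
  simpa [div_eq_inv_mul, neg_mul] using integrable_exp_neg_mul_sq (b := 1 / 2) (by norm_num)

lemma integral_Ioi_zero_exp_neg_sq_div_two :
    ∫ u in Ioi (0 : ℝ), exp (-u ^ 2 / 2) = √(2 * π) / 2 := by
  have h := integral_gaussian_Ioi (1 / 2)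
  rw [div_div_eq_mul_div, div_one, mul_comm] at h
  simpa [neg_div, div_eq_inv_mul] using h

lemma gaussQ_eq (t : ℝ) :
    gaussQ t = 1 / 2 - (√(2 * π))⁻¹ * ∫ u in (0 : ℝ)..t, exp (-u ^ 2 / 2) := by
  have hπ : √(2 * π) ≠ 0 := by positivity
  rw [gaussQ, ← intervalIntegral.integral_Ioi_sub_Ioi' integrable_exp_neg_sq_div_two.integrableOn
    integrable_exp_neg_sq_div_two.integrableOn, integral_Ioi_zero_exp_neg_sq_div_two]
  field_simp
  ring

lemma gaussQ_zero : gaussQ 0 = 1 / 2 := by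
  simp [gaussQ_eq]

lemma hasDerivAt_gaussQ (t : ℝ) :
    HasDerivAt gaussQ (-((√(2 * π))⁻¹ * exp (-t ^ 2 / 2))) t := by
  have hcont : Continuous fun u : ℝ => exp (-u ^ 2 / 2) := by fun_prop
  have hint := intervalIntegral.integral_hasDerivAt_right
    integrable_exp_neg_sq_div_two.intervalIntegrable (a := 0) (b := t)
    (hcont.stronglyMeasurableAtFilter _ _) hcont.continuousAt
  rw [show gaussQ = _ from funext gaussQ_eq]
  exact (hint.const_mul (√(2 * π))⁻¹).const_sub (1 / 2)

lemma deriv_gaussQ : deriv gaussQ = fun t => -((√(2 * π))⁻¹ * exp (-t ^ 2 / 2)) :=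
  funext fun t => (hasDerivAt_gaussQ t).deriv

lemma continuous_gaussQ : Continuous gaussQ :=
  continuous_iff_continuousAt.2 fun t => (hasDerivAt_gaussQ t).continuousAt

lemma gaussQ_strictAnti : StrictAnti gaussQ :=
  strictAnti_of_deriv_neg fun t => by rw [deriv_gaussQ]; simp only [neg_lt_zero]; positivity

lemma tendsto_gaussQ_atTop : Tendsto gaussQ atTop (𝓝 0) := by
  have hint := intervalIntegral_tendsto_integral_Ioi 0
    integrable_exp_neg_sq_div_two.integrableOn tendsto_id
  rw [integral_Ioi_zero_exp_neg_sq_div_two] at hint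
  have hπ : √(2 * π) ≠ 0 := by positivity
  have hlim : 1 / 2 - (√(2 * π))⁻¹ * (√(2 * π) / 2) = 0 := by field_simp; norm_num
  have hQ := (hint.const_mul (√(2 * π))⁻¹).const_sub (1 / 2)
  rw [hlim] at hQ
  rwa [show gaussQ = _ from funext gaussQ_eq]

lemma surjOn_gaussQ : SurjOn gaussQ (Ioi 0) (Ioo 0 (1 / 2)) := by
  rintro y ⟨hy₀, hy₁⟩
  obtain ⟨T, hT⟩ := (tendsto_gaussQ_atTop.eventually (eventually_lt_nhds hy₀)).exists
  have hT₀ : 0 ≤ T := gaussQ_strictAnti.lt_iff_gt.1 (by rw [gaussQ_zero]; linarith) |>.le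
  obtain ⟨x, hx, rfl⟩ := intermediate_value_Ioo' hT₀ continuous_gaussQ.continuousOn
    ⟨hT, gaussQ_zero ▸ hy₁⟩
  exact ⟨x, hx.1, rfl⟩

lemma strictConvexOn_gaussQ : StrictConvexOn ℝ (Ioi 0) gaussQ := by
  refine StrictMonoOn.strictConvexOn_of_deriv (convex_Ioi 0) continuous_gaussQ.continuousOn ?_
  rw [interior_Ioi, deriv_gaussQ]
  intro x hx y _ hxy
  simp only [neg_lt_neg_iff]
  gcongr
  exact (mem_Ioi.1 hx).le

theorem stmt_2 : StrictConvexOn ℝ (Set.Ioo (0 : ℝ) (1 / 2)) Qinv :=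
  strictConvexOn_gaussQ.strictConvexOn_of_strictAntiOn_of_leftInvOn
    (gaussQ_strictAnti.strictAntiOn _)
    (fun x _ => Function.leftInverse_invFun gaussQ_strictAnti.injective x)
    surjOn_gaussQ (convex_Ioo 0 (1 / 2))
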